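/- Let $\mathcal{X}, \mathcal{Y}$ be normed spaces, $a_0 : \mathcal{X} \times \mathcal{Y} \to \mathbb{C}$ a bounded bilinear form satisfying the inf-sup condition $\inf_{0\ne w} \sup_{0\ne v} \frac{|a_0(w,v)|}{\|w\|\|v\|} \ge \mu_0 > 0$, and $(a_j)_{j\ge1}$ bounded bilinear forms with norms $\|a_j\| \le \beta_j \mu_0$ where $\sum_{j\ge1} \rho_j \beta_j \le 1 - \delta$ for some $\delta > 0$ and nonnegative reals $\rho_j$. Then for any complex sequence $(z_j)$ with $|z_j| \le \rho_j$ for all $j$, the perturbed form $a(z; w, v) = a_0(w,v) + \sum_{j\ge1} z_j a_j(w,v)$ satisfies $\inf_{0\ne w} \sup_{0\ne v} \frac{|a(z; w,v)|}{\|w\|\|v\|} \ge \mu_0 \delta > 0$. -/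

import Mathlib

/-- Uniform parametric inf-sup for affine-parametric perturbations: if the bounded
form `a₀` satisfies an inf-sup condition with constant `μ₀ > 0`, the perturbing
forms `aj j` satisfy `|aj j w v| ≤ βⱼ μ₀ ‖w‖‖v‖` and `∑ ρⱼ βⱼ ≤ 1 - δ`, then for
any complex parameters with `|zⱼ| ≤ ρⱼ`, the perturbed form
`a(z) = a₀ + ∑ zⱼ aⱼ` satisfies the inf-sup condition with constant `μ₀ δ`. -/
theorem stmt_7 {X Y : Type*} [NormedAddCommGroup X] [NormedAddCommGroup Y]
    [NormedSpace ℂ X] [NormedSpace ℂ Y] [Nontrivial Y]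
    (a0 : X → Y → ℂ) (aj : ℕ → X → Y → ℂ)
    (μ0 δ Ca : ℝ) (β ρ : ℕ → ℝ)
    (hμ0 : 0 < μ0) (hδ : 0 < δ)
    (hβ : ∀ j, 0 ≤ β j) (hρ : ∀ j, 0 ≤ ρ j)
    (hCa : ∀ w v, ‖a0 w v‖ ≤ Ca * ‖w‖ * ‖v‖)
    (hbound : ∀ j w v, ‖aj j w v‖ ≤ β j * μ0 * ‖w‖ * ‖v‖)
    (hsum : Summable fun j => ρ j * β j)
    (htsum : (∑' j, ρ j * β j) ≤ 1 - δ)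
    (hinfsup : ∀ w : X, w ≠ 0 →
      μ0 ≤ ⨆ v : {v : Y // v ≠ 0}, ‖a0 w (v : Y)‖ / (‖w‖ * ‖(v : Y)‖))
    (z : ℕ → ℂ) (hz : ∀ j, ‖z j‖ ≤ ρ j) :
    ∀ w : X, w ≠ 0 →
      μ0 * δ ≤ ⨆ v : {v : Y // v ≠ 0},
        ‖a0 w (v : Y) + ∑' j, z j * aj j w (v : Y)‖ / (‖w‖ * ‖(v : Y)‖) := by
  intro w hw
  obtain ⟨y, hy⟩ := exists_ne (0 : Y)
  haveI : Nonempty {v : Y // v ≠ 0} := ⟨⟨y, hy⟩⟩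
  have hwpos : 0 < ‖w‖ := norm_pos_iff.mpr hw
  -- pointwise bounds for each v ≠ 0
  have key : ∀ v : Y, v ≠ 0 →
      ‖∑' j, z j * aj j w v‖ ≤ (1 - δ) * μ0 * (‖w‖ * ‖v‖) := by
    intro v hv
    have hterm : ∀ j, ‖z j * aj j w v‖ ≤ ρ j * β j * (μ0 * (‖w‖ * ‖v‖)) := by
      intro j
      rw [norm_mul]
      calc ‖z j‖ * ‖aj j w v‖ ≤ ρ j * (β j * μ0 * ‖w‖ * ‖v‖) := by
            exact mul_le_mul (hz j) (hbound j w v) (norm_nonneg _) (hρ j)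
        _ = ρ j * β j * (μ0 * (‖w‖ * ‖v‖)) := by ring
    have hsum2 : Summable fun j => ρ j * β j * (μ0 * (‖w‖ * ‖v‖)) := hsum.mul_right _
    have hSn : Summable fun j => ‖z j * aj j w v‖ :=
      Summable.of_nonneg_of_le (fun j => norm_nonneg _) hterm hsum2
    calc ‖∑' j, z j * aj j w v‖ = ‖∑' j, z j * aj j w v‖ := rfl
      _ ≤ ∑' j, ‖z j * aj j w v‖ := norm_tsum_le_tsum_norm hSn
      _ ≤ ∑' j, ρ j * β j * (μ0 * (‖w‖ * ‖v‖)) :=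
          Summable.tsum_le_tsum hterm hSn hsum2
      _ = (∑' j, ρ j * β j) * (μ0 * (‖w‖ * ‖v‖)) := tsum_mul_right
      _ ≤ (1 - δ) * (μ0 * (‖w‖ * ‖v‖)) := by
          apply mul_le_mul_of_nonneg_right htsum
          positivity
      _ = (1 - δ) * μ0 * (‖w‖ * ‖v‖) := by ring
  set f : {v : Y // v ≠ 0} → ℝ := fun v =>
    ‖a0 w (v : Y) + ∑' j, z j * aj j w (v : Y)‖ / (‖w‖ * ‖(v : Y)‖) with hf
  have hd : ∀ v : {v : Y // v ≠ 0}, 0 < ‖w‖ * ‖(v : Y)‖ := fun v =>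
    mul_pos hwpos (norm_pos_iff.mpr v.2)
  have hfb : ∀ v, f v ≤ Ca + (1 - δ) * μ0 := by
    intro v
    rw [hf, div_le_iff₀ (hd v)]
    calc ‖a0 w (v : Y) + ∑' j, z j * aj j w (v : Y)‖
        ≤ ‖a0 w (v : Y)‖ + ‖∑' j, z j * aj j w (v : Y)‖ :=
          norm_add_le _ _
      _ ≤ Ca * ‖w‖ * ‖(v : Y)‖ + (1 - δ) * μ0 * (‖w‖ * ‖(v : Y)‖) :=
          add_le_add (hCa w _) (key _ v.2)
      _ = (Ca + (1 - δ) * μ0) * (‖w‖ * ‖(v : Y)‖) := by ring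
  have hbdd : BddAbove (Set.range f) := ⟨Ca + (1 - δ) * μ0, by rintro x ⟨v, rfl⟩; exact hfb v⟩
  have hg : ∀ v : {v : Y // v ≠ 0},
      ‖a0 w (v : Y)‖ / (‖w‖ * ‖(v : Y)‖) ≤ (⨆ v, f v) + (1 - δ) * μ0 := by
    intro v
    have h1 : ‖a0 w (v : Y)‖ / (‖w‖ * ‖(v : Y)‖) ≤ f v + (1 - δ) * μ0 := by
      rw [hf, div_add' _ _ _ (ne_of_gt (hd v)), div_le_div_iff₀ (hd v) (hd v)]
      have : ‖a0 w (v : Y)‖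
          ≤ ‖a0 w (v : Y) + ∑' j, z j * aj j w (v : Y)‖
            + (1 - δ) * μ0 * (‖w‖ * ‖(v : Y)‖) := by
        calc ‖a0 w (v : Y)‖
            ≤ ‖a0 w (v : Y) + ∑' j, z j * aj j w (v : Y)‖
              + ‖∑' j, z j * aj j w (v : Y)‖ := by
              simpa using norm_le_add_norm_add (a0 w (v : Y)) (∑' j, z j * aj j w (v : Y))
          _ ≤ _ := by linarith [key (v : Y) v.2]
      nlinarith [hd v, this, norm_nonneg (a0 w (v : Y))]
    exact h1.trans (by gcongr; exact le_ciSup hbdd v)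
  have h2 : μ0 ≤ (⨆ v, f v) + (1 - δ) * μ0 := (hinfsup w hw).trans (ciSup_le hg)
  have : μ0 * δ ≤ ⨆ v, f v := by nlinarith
  exact this
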